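/- arXiv:1810.02854 — 6 statements merged into one kernel-verified Lean document; each statement's English description precedes it below -/
import Mathlib

section
/- Consider the continuous-time Markov chain on ℤ_{≥0} with transitions m → m+1 at rate κ₁ and m → m - r at rate κ₂ · m!/(m-b-1)! for m ≥ b+1, where b ≥ 1, 0 ≤ a ≤ b, r = b - a + 1, and κ₂ r (b+1)! > κ₁. Then for any integer w with 2 ≤ w ≤ r, the stationary distribution π satisfies π(b + w) ≤ (κ₁/κ₂)^w · (∏_{j=1}^w (j-1)!) / (∏_{j=1}^w (j+b)!) ≤ (κ₁/κ₂)^w / ((b+1)!(b+2)!). -/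
/-!
Across the cut between the states `M` and `M + 1` the chain moves up only by `M → M + 1` and
moves down only from the `r` states `M + 1, …, M + r`, so stationarity balances the fluxes:
`∑_{k=M+1}^{M+r} π k φ k = κ₁ π M`. Dropping all terms but `k = M + 1` gives
`π (M + 1) ≤ κ₁ π M / φ (M + 1)`, and `φ (b + j + 1) = κ₂ (b + j + 1)! / j!`; iterating from
`π b ≤ 1` yields the first bound. The second compares the products factor by factor.
-/

open Finset

/-- Global balance equations of the chain with jumps `m → m + 1` at rate `κ` and
`m → m - r` at rate `φ m`. -/
def BalanceEquations (π φ : ℕ → ℝ) (κ : ℝ) (r : ℕ) : Prop :=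
  ∀ m, (if 1 ≤ m then π (m - 1) * κ else 0) + π (m + r) * φ (m + r) = π m * (κ + φ m)

section FluxBalance

variable {π φ : ℕ → ℝ} {κ : ℝ} {r : ℕ}

theorem sum_flux_eq_of_balance (hφ : ∀ k < r, φ k = 0)
    (hbal : BalanceEquations π φ κ r) (M : ℕ) :
    ∑ i ∈ range r, π (M + 1 + i) * φ (M + 1 + i) = κ * π M := by
  induction M with
  | zero =>
    have h0 := hbal 0
    simp only [Nat.one_ne_zero, if_false, le_zero_iff, zero_add] at h0
    cases r with
    | zero => rw [sum_range_zero]; linarith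
    | succ n =>
      rw [sum_range_succ, sum_eq_zero fun i hi => by rw [hφ _ (by simp at hi; omega), mul_zero],
        zero_add, show 0 + 1 + n = n + 1 by omega, h0, hφ 0 (by omega)]
      ring
  | succ M ih =>
    have hstep := hbal (M + 1)
    simp only [le_add_iff_nonneg_left, Nat.zero_le, if_true, Nat.add_sub_cancel] at hstep
    have hshift := sum_range_succ (fun i => π (M + 1 + i) * φ (M + 1 + i)) r
    rw [sum_range_succ', ih] at hshift
    simp only [add_assoc, add_comm 1, add_zero] at hshift hstep ⊢
    linarith

theorem flux_le_of_balance (hφ : ∀ k < r, φ k = 0)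
    (hbal : BalanceEquations π φ κ r)
    (hnonneg : ∀ k, 0 ≤ π k * φ k) (hr : 1 ≤ r) (M : ℕ) :
    π (M + 1) * φ (M + 1) ≤ κ * π M := by
  rw [← sum_flux_eq_of_balance hφ hbal M]
  exact single_le_sum (f := fun i => π (M + 1 + i) * φ (M + 1 + i)) (fun i _ => hnonneg _)
    (mem_range.2 hr)

end FluxBalance

open Nat

theorem le_prod_mul_of_le_mul {u c : ℕ → ℝ} (hc : ∀ n, 0 ≤ c n)
    (h : ∀ n, u (n + 1) ≤ c n * u n) (n : ℕ) : u n ≤ (∏ i ∈ range n, c i) * u 0 := by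
  induction n with
  | zero => simp
  | succ n ih =>
    calc u (n + 1) ≤ c n * u n := h n
      _ ≤ c n * ((∏ i ∈ range n, c i) * u 0) := mul_le_mul_of_nonneg_left ih (hc n)
      _ = (∏ i ∈ range (n + 1), c i) * u 0 := by rw [prod_range_succ]; ring

theorem factorial_mul_descFactorial_add (b j : ℕ) :
    j ! * (b + j + 1).descFactorial (b + 1) = (j + 1 + b)! := by
  have h := factorial_mul_descFactorial (show b + 1 ≤ b + j + 1 by omega)
  rw [show b + j + 1 - (b + 1) = j by omega] at h
  rwa [show j + 1 + b = b + j + 1 by omega]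

theorem le_mul_of_mul_descFactorial_le {x y κ₁ κ₂ : ℝ} {b j : ℕ} (hκ₂ : 0 < κ₂)
    (h : x * (κ₂ * ((b + j + 1).descFactorial (b + 1) : ℝ)) ≤ κ₁ * y) :
    x ≤ κ₁ / κ₂ * ((j ! : ℝ) / ((j + 1 + b)! : ℝ)) * y := by
  have hfact : (j ! : ℝ) * ((b + j + 1).descFactorial (b + 1) : ℝ) = ((j + 1 + b)! : ℝ) := by
    exact_mod_cast factorial_mul_descFactorial_add b j
  have hD : (0 : ℝ) < (b + j + 1).descFactorial (b + 1) :=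
    Nat.cast_pos.2 (Nat.pos_of_ne_zero (descFactorial_eq_zero_iff_lt.not.2 (by omega)))
  calc x = x * (κ₂ * ((b + j + 1).descFactorial (b + 1) : ℝ)) * j ! / (κ₂ * (j + 1 + b)!) := by
        rw [← hfact]; field_simp
    _ ≤ κ₁ * y * j ! / (κ₂ * (j + 1 + b)!) := by gcongr
    _ = κ₁ / κ₂ * ((j ! : ℝ) / ((j + 1 + b)! : ℝ)) * y := by ring

theorem prod_factorial_mul_le_prod_factorial_add (b w : ℕ) (hw : 2 ≤ w) :
    (∏ j ∈ range w, j !) * ((b + 1)! * (b + 2)!) ≤ ∏ j ∈ range w, (j + 1 + b)! := by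
  calc (∏ j ∈ range w, j !) * ((b + 1)! * (b + 2)!)
      = (∏ j ∈ Ico 2 w, j !) * ((b + 1)! * (b + 2)!) := by
        rw [← prod_range_mul_prod_Ico _ hw]; simp [prod_range_succ]
    _ ≤ (∏ j ∈ Ico 2 w, (j + 1 + b)!) * ((b + 1)! * (b + 2)!) := by
        gcongr with j; omega
    _ = ∏ j ∈ range w, (j + 1 + b)! := by
        rw [← prod_range_mul_prod_Ico _ hw]; simp [prod_range_succ, add_comm]; ring

theorem stmt6_general (a b r : ℕ) (hr : r = b - a + 1)
    (κ₁ κ₂ : ℝ) (h1 : 0 < κ₁) (h2 : 0 < κ₂)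
    (π : ℕ → ℝ) (hπ0 : ∀ m, 0 ≤ π m) (hπ1 : HasSum π 1)
    (hstat : ∀ m : ℕ,
      (if 1 ≤ m then π (m - 1) * κ₁ else 0)
          + π (m + r) * (κ₂ * (Nat.descFactorial (m + r) (b + 1) : ℝ))
        = π m * (κ₁ + κ₂ * (Nat.descFactorial m (b + 1) : ℝ)))
    (w : ℕ) (hw2 : 2 ≤ w) :
    π (b + w) ≤ (κ₁ / κ₂) ^ w *
        (∏ j ∈ Finset.range w, (Nat.factorial j : ℝ)) /
          (∏ j ∈ Finset.range w, (Nat.factorial (j + 1 + b) : ℝ)) ∧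
      (κ₁ / κ₂) ^ w *
          (∏ j ∈ Finset.range w, (Nat.factorial j : ℝ)) /
            (∏ j ∈ Finset.range w, (Nat.factorial (j + 1 + b) : ℝ))
        ≤ (κ₁ / κ₂) ^ w / ((Nat.factorial (b + 1) : ℝ) * (Nat.factorial (b + 2) : ℝ)) := by
  have hφ : ∀ k < r, κ₂ * (k.descFactorial (b + 1) : ℝ) = 0 := fun k hk => by
    rw [descFactorial_eq_zero_iff_lt.2 (show k < b + 1 by omega), Nat.cast_zero, mul_zero]
  have hflux :=
    flux_le_of_balance hφ hstat (fun k => mul_nonneg (hπ0 k) (by positivity)) (by omega)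
  have hiter := le_prod_mul_of_le_mul (u := fun j => π (b + j)) (fun j => by positivity)
    (fun j => le_mul_of_mul_descFactorial_le h2 (hflux (b + j))) w
  rw [prod_mul_distrib, prod_const, card_range, prod_div_distrib, ← mul_div_assoc] at hiter
  constructor
  · exact hiter.trans (mul_le_of_le_one_right (by positivity) (le_hasSum hπ1 b fun j _ => hπ0 j))
  · rw [div_le_div_iff₀ (by positivity) (by positivity), mul_assoc]
    gcongr
    exact_mod_cast prod_factorial_mul_le_prod_factorial_add b w hw2

theorem stmt6 (a b r : ℕ) (hab : a ≤ b) (hb : 1 ≤ b) (hr : r = b - a + 1)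
    (κ₁ κ₂ : ℝ) (h1 : 0 < κ₁) (h2 : 0 < κ₂)
    (hgap : κ₁ < κ₂ * r * (Nat.factorial (b + 1) : ℝ))
    (π : ℕ → ℝ) (hπ0 : ∀ m, 0 ≤ π m) (hπ1 : HasSum π 1)
    (hsupp : ∀ m, m < a → π m = 0)
    (hstat : ∀ m : ℕ,
      (if 1 ≤ m then π (m - 1) * κ₁ else 0)
          + π (m + r) * (κ₂ * (Nat.descFactorial (m + r) (b + 1) : ℝ))
        = π m * (κ₁ + κ₂ * (Nat.descFactorial m (b + 1) : ℝ)))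
    (w : ℕ) (hw2 : 2 ≤ w) (hwr : w ≤ r) :
    π (b + w) ≤ (κ₁ / κ₂) ^ w *
        (∏ j ∈ Finset.range w, (Nat.factorial j : ℝ)) /
          (∏ j ∈ Finset.range w, (Nat.factorial (j + 1 + b) : ℝ)) ∧
      (κ₁ / κ₂) ^ w *
          (∏ j ∈ Finset.range w, (Nat.factorial j : ℝ)) /
            (∏ j ∈ Finset.range w, (Nat.factorial (j + 1 + b) : ℝ))
        ≤ (κ₁ / κ₂) ^ w / ((Nat.factorial (b + 1) : ℝ) * (Nat.factorial (b + 2) : ℝ)) :=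
  stmt6_general a b r hr κ₁ κ₂ h1 h2 π hπ0 hπ1 hstat w hw2
end

section
/- Let d ≥ 1, x ∈ ℤ_{≥0}^d, and ε > 0. The stationary distribution π of the point mass network PointMass(x, ε) satisfies ‖π - δ_x‖_∞ < ε, where δ_x is the point mass distribution at x. -/
/-- The normalizing constant `Mᵢ` of the `i`-th marginal of the stationary
distribution of the point mass network `PointMass(x, ε)`. -/
noncomputable def pmNorm (d xi : ℕ) (ε : ℝ) : ℝ :=
  ∑' n : ℕ, (ε / (2 * d)) ^ n *
    ∏ j ∈ Finset.range n, (Nat.factorial j : ℝ) / (Nat.factorial (xi + j + 1))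

/-- The `i`-th marginal stationary distribution of `PointMass(x, ε)`,
where `xi = x(i)`: the point mass at `0` if `xi = 0`, and otherwise
`π_i(xi + n) = (1/Mᵢ)(ε/(2d))^n ∏_{j=1}^n (j-1)!/((xi+j)!)` on `{m ≥ xi}`. -/
noncomputable def pmMarginal (d xi : ℕ) (ε : ℝ) (m : ℕ) : ℝ :=
  if xi = 0 then (if m = 0 then 1 else 0)
  else if xi ≤ m then
    (1 / pmNorm d xi ε) * (ε / (2 * d)) ^ (m - xi) *
      ∏ j ∈ Finset.range (m - xi), (Nat.factorial j : ℝ) / (Nat.factorial (xi + j + 1))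
  else 0

noncomputable def pmTerm (d xi : ℕ) (ε : ℝ) (n : ℕ) : ℝ :=
  (ε / (2 * d)) ^ n *
    ∏ j ∈ Finset.range n, (Nat.factorial j : ℝ) / (Nat.factorial (xi + j + 1))

lemma pmNorm_eq (d xi : ℕ) (ε : ℝ) : pmNorm d xi ε = ∑' n, pmTerm d xi ε n := rfl

lemma pmProd_nonneg (xi n : ℕ) :
    0 ≤ ∏ j ∈ Finset.range n, (Nat.factorial j : ℝ) / (Nat.factorial (xi + j + 1)) := by
  positivity

lemma pmProd_le (xi : ℕ) (hxi : 1 ≤ xi) (n : ℕ) :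
    ∏ j ∈ Finset.range n, (Nat.factorial j : ℝ) / (Nat.factorial (xi + j + 1)) ≤ (1/2)^n := by
  have h : ∀ j ∈ Finset.range n,
      (Nat.factorial j : ℝ) / (Nat.factorial (xi + j + 1)) ≤ 1/2 := by
    intro j _
    have hnat : 2 * Nat.factorial j ≤ Nat.factorial (xi + j + 1) := by
      have h1 : Nat.factorial (j + 2) ≤ Nat.factorial (xi + j + 1) :=
        Nat.factorial_le (by omega)
      have h2 : 2 * Nat.factorial j ≤ Nat.factorial (j + 2) := by
        rw [show j + 2 = (j+1) + 1 by ring, Nat.factorial_succ, Nat.factorial_succ]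
        calc 2 * j.factorial ≤ 2 * ((j+1) * j.factorial) :=
              Nat.mul_le_mul_left 2 (Nat.le_mul_of_pos_left _ (by omega))
          _ ≤ (j+1+1) * ((j+1) * j.factorial) := Nat.mul_le_mul_right _ (by omega)
      omega
    rw [div_le_div_iff₀ (by positivity) (by norm_num)]
    have : (2 : ℝ) * Nat.factorial j ≤ Nat.factorial (xi + j + 1) := by exact_mod_cast hnat
    linarith
  calc ∏ j ∈ Finset.range n, (Nat.factorial j : ℝ) / (Nat.factorial (xi + j + 1))
      ≤ ∏ _j ∈ Finset.range n, (1/2 : ℝ) :=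
        Finset.prod_le_prod (fun j _ => by positivity) h
    _ = (1/2)^n := by simp

lemma pmTerm_nonneg (d xi : ℕ) {ε : ℝ} (hε : 0 ≤ ε) (n : ℕ) : 0 ≤ pmTerm d xi ε n := by
  unfold pmTerm; positivity

lemma pmTerm_zero (d xi : ℕ) (ε : ℝ) : pmTerm d xi ε 0 = 1 := by simp [pmTerm]

lemma pmTerm_le (d xi : ℕ) (hxi : 1 ≤ xi) {ε : ℝ} (hε : 0 ≤ ε) (n : ℕ) :
    pmTerm d xi ε n ≤ (ε / (4 * d)) ^ n := by
  unfold pmTerm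
  have hsplit : (ε / (4 * d)) ^ n = (ε / (2 * d)) ^ n * (1/2)^n := by
    rw [← mul_pow]; congr 1; ring
  rw [hsplit]
  exact mul_le_mul_of_nonneg_left (pmProd_le xi hxi n) (by positivity)

lemma pmRatio_lt_one {d : ℕ} (hd : 1 ≤ d) {ε : ℝ} (hε : 0 ≤ ε) (hε1 : ε ≤ 1) :
    ε / (4 * d) < 1 := by
  have hdR : (1:ℝ) ≤ d := by exact_mod_cast hd
  rw [div_lt_one (by positivity)]; linarith

lemma pmSummable {d : ℕ} (hd : 1 ≤ d) (xi : ℕ) (hxi : 1 ≤ xi) {ε : ℝ} (hε : 0 ≤ ε)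
    (hε1 : ε ≤ 1) : Summable (pmTerm d xi ε) :=
  Summable.of_nonneg_of_le (pmTerm_nonneg d xi hε) (pmTerm_le d xi hxi hε)
    (summable_geometric_of_lt_one (by positivity) (pmRatio_lt_one hd hε hε1))

lemma one_le_pmNorm {d : ℕ} (xi : ℕ) {ε : ℝ} (hε : 0 ≤ ε)
    (hs : Summable (pmTerm d xi ε)) : 1 ≤ pmNorm d xi ε := by
  have h := Summable.le_tsum hs 0 (fun j _ => pmTerm_nonneg d xi hε j)
  rw [pmTerm_zero] at h
  rw [pmNorm_eq]; exact h

lemma pmNorm_le {d : ℕ} (hd : 1 ≤ d) (xi : ℕ) (hxi : 1 ≤ xi) {ε : ℝ} (hε : 0 ≤ ε)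
    (hε1 : ε ≤ 1) : pmNorm d xi ε ≤ 1 + ε / (3 * d) := by
  have hdR : (1:ℝ) ≤ d := by exact_mod_cast hd
  have hs0 : (0:ℝ) ≤ ε / (4 * d) := by positivity
  have hs14 : ε / (4 * d) ≤ 1/4 := by
    rw [div_le_iff₀ (by positivity)]; nlinarith
  have hlt := pmRatio_lt_one hd hε hε1
  have h1 : pmNorm d xi ε ≤ ∑' n : ℕ, (ε / (4 * d)) ^ n := by
    rw [pmNorm_eq]
    exact Summable.tsum_le_tsum (pmTerm_le d xi hxi hε) (pmSummable hd xi hxi hε hε1)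
      (summable_geometric_of_lt_one hs0 hlt)
  rw [tsum_geometric_of_lt_one hs0 hlt] at h1
  have h2 : (1 - ε / (4 * d))⁻¹ ≤ 1 + ε / (3 * d) := by
    have hpos : 0 < 1 - ε / (4 * d) := by linarith
    rw [inv_eq_one_div, div_le_iff₀ hpos]
    have hc : ε / (3 * d) = (4/3) * (ε / (4 * d)) := by field_simp
    rw [hc]
    nlinarith [mul_nonneg (by linarith : (0:ℝ) ≤ 1/4 - ε / (4*d)) hs0]
  linarith

lemma pmNorm_nonneg (d xi : ℕ) {ε : ℝ} (hε : 0 ≤ ε) : 0 ≤ pmNorm d xi ε := by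
  rw [pmNorm_eq]; exact tsum_nonneg (pmTerm_nonneg d xi hε)

lemma pmMarginal_nonneg (d xi : ℕ) {ε : ℝ} (hε : 0 ≤ ε) (m : ℕ) :
    0 ≤ pmMarginal d xi ε m := by
  have h0 := pmNorm_nonneg d xi hε
  unfold pmMarginal
  split_ifs <;> positivity

lemma pmMarginal_le_one (d xi : ℕ) {ε : ℝ} (hε : 0 ≤ ε) (m : ℕ) :
    pmMarginal d xi ε m ≤ 1 := by
  unfold pmMarginal
  split_ifs with h1 h2 h3
  · exact le_refl 1
  · norm_num
  · by_cases hs : Summable (pmTerm d xi ε)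
    · have hM1 : 1 ≤ pmNorm d xi ε := one_le_pmNorm xi hε hs
      have hMpos : 0 < pmNorm d xi ε := by linarith
      have ht : pmTerm d xi ε (m - xi) ≤ pmNorm d xi ε := by
        rw [pmNorm_eq]; exact Summable.le_tsum hs _ (fun j _ => pmTerm_nonneg d xi hε j)
      calc (1 / pmNorm d xi ε) * (ε / (2 * d)) ^ (m - xi) *
            ∏ j ∈ Finset.range (m - xi), (Nat.factorial j : ℝ) / (Nat.factorial (xi + j + 1))
          = (1 / pmNorm d xi ε) * pmTerm d xi ε (m - xi) := by rw [mul_assoc]; rfl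
        _ ≤ (1 / pmNorm d xi ε) * pmNorm d xi ε :=
            mul_le_mul_of_nonneg_left ht (by positivity)
        _ = 1 := one_div_mul_cancel (ne_of_gt hMpos)
    · have hM0 : pmNorm d xi ε = 0 := by
        rw [pmNorm_eq]; exact tsum_eq_zero_of_not_summable hs
      rw [hM0, div_zero, zero_mul, zero_mul]; norm_num
  · norm_num

lemma pmMarginal_self_ge {d : ℕ} (hd : 1 ≤ d) (xi : ℕ) {ε : ℝ} (hε : 0 ≤ ε)
    (hε1 : ε ≤ 1) : 1 - ε / (3 * d) ≤ pmMarginal d xi ε xi := by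
  have hdR : (1:ℝ) ≤ d := by exact_mod_cast hd
  have hc0 : (0:ℝ) ≤ ε / (3 * d) := by positivity
  unfold pmMarginal
  split_ifs with h1 h2
  · linarith
  · have hxi : 1 ≤ xi := Nat.one_le_iff_ne_zero.mpr h1
    have hs := pmSummable hd xi hxi hε hε1
    have hM1 : 1 ≤ pmNorm d xi ε := one_le_pmNorm xi hε hs
    have hMle : pmNorm d xi ε ≤ 1 + ε / (3 * d) := pmNorm_le hd xi hxi hε hε1
    have hMpos : 0 < pmNorm d xi ε := by linarith
    simp only [Nat.sub_self, pow_zero, Finset.range_zero, Finset.prod_empty, mul_one]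
    have h3 : 1 / (1 + ε / (3 * d)) ≤ 1 / pmNorm d xi ε :=
      one_div_le_one_div_of_le hMpos hMle
    have h4 : 1 - ε / (3 * d) ≤ 1 / (1 + ε / (3 * d)) := by
      rw [le_div_iff₀ (by linarith)]
      nlinarith [mul_nonneg hc0 hc0]
    linarith
  · omega

lemma pmMarginal_ne {d : ℕ} (hd : 1 ≤ d) (xi : ℕ) {ε : ℝ} (hε : 0 ≤ ε)
    (hε1 : ε ≤ 1) (m : ℕ) (hne : m ≠ xi) : pmMarginal d xi ε m ≤ ε / (4 * d) := by
  have hdR : (1:ℝ) ≤ d := by exact_mod_cast hd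
  have hs0 : (0:ℝ) ≤ ε / (4 * d) := by positivity
  unfold pmMarginal
  split_ifs with h1 h2 h3
  · omega
  · exact hs0
  · have hxi : 1 ≤ xi := Nat.one_le_iff_ne_zero.mpr h1
    have hs := pmSummable hd xi hxi hε hε1
    have hM1 : 1 ≤ pmNorm d xi ε := one_le_pmNorm xi hε hs
    have hMpos : 0 < pmNorm d xi ε := by linarith
    have hn : m - xi ≠ 0 := by omega
    calc (1 / pmNorm d xi ε) * (ε / (2 * d)) ^ (m - xi) *
          ∏ j ∈ Finset.range (m - xi), (Nat.factorial j : ℝ) / (Nat.factorial (xi + j + 1))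
        = (1 / pmNorm d xi ε) * pmTerm d xi ε (m - xi) := by rw [mul_assoc]; rfl
      _ ≤ 1 * pmTerm d xi ε (m - xi) := by
          apply mul_le_mul_of_nonneg_right _ (pmTerm_nonneg d xi hε _)
          rw [div_le_one hMpos]; exact hM1
      _ = pmTerm d xi ε (m - xi) := one_mul _
      _ ≤ (ε / (4 * d)) ^ (m - xi) := pmTerm_le d xi hxi hε _
      _ ≤ ε / (4 * d) := pow_le_of_le_one hs0 (le_of_lt (pmRatio_lt_one hd hε hε1)) hn
  · exact hs0

theorem stmt8 (d : ℕ) (hd : 1 ≤ d) (x : Fin d → ℕ) (ε : ℝ) (hε : 0 < ε) :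
    (⨆ y : Fin d → ℕ,
        |(∏ i, pmMarginal d (x i) ε (y i)) - (if y = x then (1 : ℝ) else 0)|) < ε := by
  have hdR : (1:ℝ) ≤ d := by exact_mod_cast hd
  rcases le_or_gt ε 1 with hε1 | hε1
  · -- ε ≤ 1 : bound every term by ε/3
    have key : ∀ y : Fin d → ℕ,
        |(∏ i, pmMarginal d (x i) ε (y i)) - (if y = x then (1 : ℝ) else 0)| ≤ ε/3 := by
      intro y
      have hnn : ∀ i, 0 ≤ pmMarginal d (x i) ε (y i) :=
        fun i => pmMarginal_nonneg d (x i) hε.le (y i)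
      have hle1 : ∀ i, pmMarginal d (x i) ε (y i) ≤ 1 :=
        fun i => pmMarginal_le_one d (x i) hε.le (y i)
      by_cases hyx : y = x
      · subst hyx
        rw [if_pos rfl]
        have hprodle : (∏ i, pmMarginal d (y i) ε (y i)) ≤ 1 :=
          Finset.prod_le_one (fun i _ => hnn i) (fun i _ => hle1 i)
        have hc0 : (0:ℝ) ≤ ε / (3 * d) := by positivity
        have hc1 : ε / (3 * d) ≤ 1/3 := by
          rw [div_le_iff₀ (by positivity)]; nlinarith
        have hstep : ∀ i ∈ Finset.univ (α := Fin d),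
            (1 - ε / (3 * d)) ≤ pmMarginal d (y i) ε (y i) :=
          fun i _ => pmMarginal_self_ge hd (y i) hε.le hε1
        have hgeom : (1 - ε / (3 * d))^d ≤ ∏ i, pmMarginal d (y i) ε (y i) := by
          calc (1 - ε / (3 * d))^d = ∏ _i : Fin d, (1 - ε / (3 * d)) := by
                simp [Finset.prod_const]
            _ ≤ ∏ i, pmMarginal d (y i) ε (y i) :=
                Finset.prod_le_prod (fun i _ => by linarith) hstep
        have hpow : 1 - (d:ℝ) * (ε / (3 * d)) ≤ (1 - ε / (3 * d))^d := by
          have h := one_add_mul_le_pow (a := -(ε / (3 * d))) (by linarith) d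
          have he : (1 + -(ε / (3 * d)))^d = (1 - ε / (3 * d))^d := by ring_nf
          rw [he] at h; linarith
        have hdc : (d:ℝ) * (ε / (3 * d)) = ε / 3 := by
          field_simp
        rw [hdc] at hpow
        rw [abs_le]
        constructor <;> [linarith; linarith]
      · rw [if_neg hyx]
        obtain ⟨i0, hi0⟩ := Function.ne_iff.mp hyx
        have hbound : pmMarginal d (x i0) ε (y i0) ≤ ε / (4 * d) :=
          pmMarginal_ne hd (x i0) hε.le hε1 (y i0) hi0
        have hprod : (∏ i, pmMarginal d (x i) ε (y i)) ≤ ε / (4 * d) := by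
          rw [← Finset.mul_prod_erase Finset.univ _ (Finset.mem_univ i0)]
          calc pmMarginal d (x i0) ε (y i0) *
                ∏ i ∈ Finset.univ.erase i0, pmMarginal d (x i) ε (y i)
              ≤ (ε / (4 * d)) * 1 := by
                apply mul_le_mul hbound
                  (Finset.prod_le_one (fun i _ => hnn i) (fun i _ => hle1 i))
                  (Finset.prod_nonneg (fun i _ => hnn i)) (by positivity)
            _ = ε / (4 * d) := mul_one _
        have hprodnn : 0 ≤ ∏ i, pmMarginal d (x i) ε (y i) :=
          Finset.prod_nonneg (fun i _ => hnn i)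
        have h43 : ε / (4 * d) ≤ ε / 3 :=
          div_le_div_of_nonneg_left hε.le (by norm_num) (by linarith)
        rw [sub_zero, abs_of_nonneg hprodnn]
        linarith
    calc (⨆ y : Fin d → ℕ,
          |(∏ i, pmMarginal d (x i) ε (y i)) - (if y = x then (1 : ℝ) else 0)|)
        ≤ ε/3 := ciSup_le key
      _ < ε := by linarith
  · -- ε > 1 : every term is at most 1
    have key : ∀ y : Fin d → ℕ,
        |(∏ i, pmMarginal d (x i) ε (y i)) - (if y = x then (1 : ℝ) else 0)| ≤ 1 := by
      intro y
      have hnn : 0 ≤ ∏ i, pmMarginal d (x i) ε (y i) :=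
        Finset.prod_nonneg (fun i _ => pmMarginal_nonneg d (x i) hε.le (y i))
      have hle1 : (∏ i, pmMarginal d (x i) ε (y i)) ≤ 1 :=
        Finset.prod_le_one (fun i _ => pmMarginal_nonneg d (x i) hε.le (y i))
          (fun i _ => pmMarginal_le_one d (x i) hε.le (y i))
      rw [abs_le]
      split_ifs <;> constructor <;> linarith
    calc (⨆ y : Fin d → ℕ,
          |(∏ i, pmMarginal d (x i) ε (y i)) - (if y = x then (1 : ℝ) else 0)|)
        ≤ 1 := ciSup_le key
      _ < ε := hε1
end

section
/- Let q : ℤ_{≥0}^d → [0,1] be a distribution with finite support {x₁,…,x_m}. The continuous-time Markov chain of the network Full(q) started at (x₁, e₁) ∈ ℤ_{≥0}^{d+m} has reachability class exactly {(xᵢ, eᵢ) : 1 ≤ i ≤ m}, and its stationary distribution on this class assigns probability q(xᵢ) to state (xᵢ, eᵢ); in particular the marginal on the first d coordinates equals q. -/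
theorem stmt10 (d m : ℕ) (hm : 0 < m)
    (x : Fin m → (Fin d → ℕ)) (hx : Function.Injective x)
    (q : (Fin d → ℕ) → ℝ) (hq0 : ∀ v, 0 ≤ q v)
    (hqpos : ∀ i, 0 < q (x i))
    (hqsupp : ∀ v, (∀ i, v ≠ x i) → q v = 0)
    (hq1 : ∑ i : Fin m, q (x i) = 1)
    (yc : Fin m → (Fin d ⊕ Fin m) → ℕ)
    (hyc : ∀ i, yc i = Sum.elim (x i) (fun j => if j = i then 1 else 0))
    (κ : Fin m → Fin m → ℝ)
    (hκ : ∀ i j, κ i j = (∏ k, (Nat.factorial (x j k) : ℝ)) * q (x j))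
    (step : ((Fin d ⊕ Fin m) → ℕ) → ((Fin d ⊕ Fin m) → ℕ) → Prop)
    (hstep : ∀ s s', step s s' ↔ ∃ i j : Fin m, i ≠ j ∧ (∀ k, yc i k ≤ s k) ∧
      s' = fun k => s k - yc i k + yc j k)
    (π : ((Fin d ⊕ Fin m) → ℕ) → ℝ)
    (hπ : ∀ s, π s = ∑ i : Fin m, if s = yc i then q (x i) else 0) :
    -- the reachability class of the initial condition (x₁, e₁) is {(xᵢ, eᵢ) : i}
    {s | Relation.ReflTransGen step (yc ⟨0, hm⟩) s} = {s | ∃ i, s = yc i} ∧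
    -- the stationary distribution assigns probability q(xᵢ) to the state (xᵢ, eᵢ)
    (∀ i, π (yc i) = q (x i)) ∧
    -- π is stationary for the mass-action chain of Full(q)
    (∀ s : (Fin d ⊕ Fin m) → ℕ,
      (∑ i : Fin m, ∑ j : Fin m,
        if i ≠ j ∧ (∀ k, yc j k ≤ s k) then
          π (fun k => s k + yc i k - yc j k) *
            (κ i j * ∏ k, (Nat.descFactorial (s k + yc i k - yc j k) (yc i k) : ℝ))
        else 0)
      = π s * ∑ i : Fin m, ∑ j : Fin m,
          if i ≠ j then κ i j * ∏ k, (Nat.descFactorial (s k) (yc i k) : ℝ) else 0) ∧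
    -- the marginal of π on the first d coordinates equals q
    (∀ v : Fin d → ℕ, ∑' h : Fin m → ℕ, π (Sum.elim v h) = q v) := by
  have hycinl : ∀ i a, yc i (Sum.inl a) = x i a := fun i a => by rw [hyc]; rfl
  have hycinr : ∀ i r, yc i (Sum.inr r) = if r = i then 1 else 0 := fun i r => by rw [hyc]; rfl
  have hycinj : ∀ i j : Fin m, yc i = yc j → i = j := by
    intro i j h
    have h1 := congrFun h (Sum.inr i)
    rw [hycinr, hycinr, if_pos rfl] at h1
    by_contra hne
    rw [if_neg fun h' : i = j => hne h'] at h1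
    exact one_ne_zero h1
  have hle : ∀ i j : Fin m, (∀ k, yc j k ≤ yc i k) → j = i := by
    intro i j h
    have h1 := h (Sum.inr j)
    rw [hycinr, hycinr, if_pos rfl] at h1
    by_contra hne
    rw [if_neg fun h' : j = i => hne h'] at h1
    omega
  have hπyc : ∀ i, π (yc i) = q (x i) := by
    intro i
    rw [hπ, Finset.sum_eq_single i]
    · rw [if_pos rfl]
    · intro j _ hj
      exact if_neg fun h => hj (hycinj _ _ h.symm)
    · intro h; exact absurd (Finset.mem_univ i) h
  have hπ0 : ∀ s, (∀ i, s ≠ yc i) → π s = 0 := by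
    intro s hs; rw [hπ]; exact Finset.sum_eq_zero fun i _ => if_neg (hs i)
  have hstep_yc : ∀ (i : Fin m) s', step (yc i) s' ↔ ∃ j, j ≠ i ∧ s' = yc j := by
    intro i s'
    rw [hstep]
    constructor
    · rintro ⟨a, b, hab, hle', rfl⟩
      have ha : a = i := hle i a hle'
      subst ha
      exact ⟨b, fun h => hab h.symm, funext fun k => by simp⟩
    · rintro ⟨j, hj, rfl⟩
      exact ⟨i, j, fun h => hj h.symm, fun k => le_refl _, funext fun k => by simp⟩
  have hprodfac : ∀ i, (∏ k, ((yc i k).factorial : ℝ)) = ∏ a, ((x i a).factorial : ℝ) := by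
    intro i
    rw [Fintype.prod_sum_type]
    have h1 : ∀ b : Fin m, ((yc i (Sum.inr b)).factorial : ℝ) = 1 := by
      intro b; rw [hycinr]; split_ifs <;> simp
    simp only [hycinl, h1, Finset.prod_const_one, mul_one]
  have hkey : ∀ (s : (Fin d ⊕ Fin m) → ℕ) (i j l : Fin m), i ≠ j → (∀ k, yc j k ≤ s k) →
      (fun k => s k + yc i k - yc j k) = yc l → s = yc j := by
    intro s i j l hij hjs ht
    have hli : l = i := by
      have h1 : s (Sum.inr i) + yc i (Sum.inr i) - yc j (Sum.inr i) = yc l (Sum.inr i) :=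
        congrFun ht (Sum.inr i)
      rw [hycinr, hycinr, hycinr, if_pos rfl, if_neg (fun h : i = j => hij h)] at h1
      by_cases hil : i = l
      · exact hil.symm
      · rw [if_neg hil] at h1; omega
    subst hli
    funext k
    have h2 : s k + yc l k - yc j k = yc l k := congrFun ht k
    have h3 := hjs k
    omega
  refine ⟨?_, hπyc, ?_, ?_⟩
  · ext s
    simp only [Set.mem_setOf_eq]
    constructor
    · intro h
      induction h with
      | refl => exact ⟨⟨0, hm⟩, rfl⟩
      | tail h1 h2 ih =>
        obtain ⟨i, rfl⟩ := ih
        obtain ⟨j, _, rfl⟩ := (hstep_yc i _).mp h2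
        exact ⟨j, rfl⟩
    · rintro ⟨i, rfl⟩
      by_cases hi : i = ⟨0, hm⟩
      · subst hi; exact Relation.ReflTransGen.refl
      · exact Relation.ReflTransGen.single ((hstep_yc _ _).mpr ⟨i, hi, rfl⟩)
  · intro s
    by_cases hs : ∃ l, s = yc l
    · obtain ⟨l, rfl⟩ := hs
      rw [hπyc, Finset.mul_sum, Finset.sum_comm]
      apply Finset.sum_congr rfl
      intro a _
      rw [Finset.mul_sum]
      apply Finset.sum_congr rfl
      intro b _
      by_cases hab : a = b
      · subst hab
        rw [if_neg (fun h => h.1 rfl), if_neg (fun h : ¬ a = a => h rfl), mul_zero]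
      · by_cases hal : a = l
        · subst hal
          rw [if_pos ⟨fun h => hab h.symm, fun k => le_refl _⟩, if_pos hab]
          have h2 : ∀ k, yc a k + yc b k - yc a k = yc b k := fun k => by omega
          simp only [h2]
          rw [hπyc, hκ, hκ]
          simp only [Nat.descFactorial_self]
          rw [hprodfac, hprodfac]
          ring
        · rw [if_neg, if_pos (fun h : a = b => hab h)]
          · rw [Finset.prod_eq_zero (Finset.mem_univ (Sum.inr a))]
            · ring
            · rw [hycinr, hycinr, if_pos rfl, if_neg (fun h : a = l => hal h)]
              simp
          · rintro ⟨-, hba⟩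
            have := hba (Sum.inr a)
            rw [hycinr, hycinr, if_pos rfl, if_neg (fun h : a = l => hal h)] at this
            omega
    · push_neg at hs
      rw [hπ0 _ hs, zero_mul]
      apply Finset.sum_eq_zero; intro i _
      apply Finset.sum_eq_zero; intro j _
      split_ifs with h
      · rw [hπ0 _ (fun l hl => hs j (hkey _ i j l h.1 h.2 hl)), zero_mul]
      · rfl
  · intro v
    by_cases hv : ∃ i, v = x i
    · obtain ⟨i, hvi⟩ := hv
      have heq : ∀ h : Fin m → ℕ, π (Sum.elim v h) =
          if h = (fun j => if j = i then 1 else 0) then q v else 0 := by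
        intro h
        rw [hπ]
        by_cases hh : h = fun j => if j = i then 1 else 0
        · rw [if_pos hh]
          subst hh
          have he : Sum.elim v (fun j : Fin m => if j = i then 1 else 0) = yc i := by
            rw [hyc, hvi]
          rw [Finset.sum_eq_single i]
          · rw [if_pos he, hvi]
          · intro j _ hj
            exact if_neg fun h' => hj (hycinj i j (he.symm.trans h')).symm
          · intro h'; exact absurd (Finset.mem_univ i) h'
        · rw [if_neg hh]
          apply Finset.sum_eq_zero; intro j _
          apply if_neg
          intro he
          have hv' : v = x j := funext fun a => by
            simpa [hycinl] using congrFun he (Sum.inl a)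
          have hji : j = i := hx (hv'.symm.trans hvi)
          apply hh
          funext a
          simpa [hycinr, hji] using congrFun he (Sum.inr a)
      rw [tsum_congr heq, tsum_ite_eq]
    · push_neg at hv
      have heq : ∀ h : Fin m → ℕ, π (Sum.elim v h) = 0 := by
        intro h; rw [hπ]
        apply Finset.sum_eq_zero; intro j _
        apply if_neg
        intro he
        exact hv j (funext fun a => by simpa [hycinl] using congrFun he (Sum.inl a))
      rw [tsum_congr heq, tsum_zero]
      exact (hqsupp v hv).symm
end

section
/- For detailed balanced reaction networks: if c ∈ ℝ_{>0}^n satisfies κ_{y→y'} c^y = κ_{y'→y} c^{y'} for every reversible reaction pair, then the measure π(x) = c^x / x! on any closed irreducible class Γ ⊂ ℤ_{≥0}^n of the associated stochastic mass-action Markov chain is stationary: for each x ∈ Γ, ∑_{y→y' ∈ R} [π(x - y' + y) λ_{y→y'}(x - y' + y) - π(x) λ_{y→y'}(x)] = 0, where λ_{y→y'}(z) = κ_{y→y'} · z!/(z-y)! · 1_{z ≥ y}. -/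
/-!
Detailed balance of `c` upgrades to pairwise balance of the Markov chain: for every reaction
`y → y'` and every state `x ≥ y'`, writing `z = x + y - y'`,
`π(z) λ_{y→y'}(z) = κ_{y→y'} c^y π(x - y') = κ_{y'→y} c^{y'} π(x - y') = π(x) λ_{y'→y}(x)`,
because `c^z / z! · z!/(z-y)! = c^y · c^{z-y}/(z-y)!`. When `x ≱ y'` both sides vanish. So the
inflow into `x` through each reaction equals the outflow from `x` through the reverse reaction,
and summing over the (involutively indexed) reactions gives stationarity.
-/

open Finset

noncomputable section

namespace MassAction

variable {σ : Type*} [Fintype σ]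

/-- The product-form measure `π(x) = c^x / x!`. -/
def poissonWeight (c : σ → ℝ) (x : σ → ℕ) : ℝ :=
  ∏ k, c k ^ x k / ((x k).factorial : ℝ)

/-- The mass-action rate `λ_{y→y'}(x) = κ · x!/(x-y)!`; it vanishes unless `y ≤ x`. -/
def rate (κ : ℝ) (y x : σ → ℕ) : ℝ :=
  κ * ∏ k, ((x k).descFactorial (y k) : ℝ)

lemma pow_div_factorial_mul_descFactorial (c : ℝ) {a z : ℕ} (h : a ≤ z) :
    c ^ z / (z.factorial : ℝ) * (z.descFactorial a : ℝ)
      = c ^ a * (c ^ (z - a) / ((z - a).factorial : ℝ)) := by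
  obtain ⟨m, rfl⟩ := Nat.exists_eq_add_of_le h
  have hfact : (m.factorial : ℝ) * ((a + m).descFactorial a : ℝ) = (a + m).factorial := by
    simpa using congrArg (Nat.cast (R := ℝ)) (Nat.factorial_mul_descFactorial h)
  rw [Nat.add_sub_cancel_left, ← hfact, pow_add]
  field_simp

lemma poissonWeight_mul_prod_descFactorial (c : σ → ℝ) {a x : σ → ℕ} (h : a ≤ x) :
    poissonWeight c x * ∏ k, ((x k).descFactorial (a k) : ℝ)
      = (∏ k, c k ^ a k) * poissonWeight c (x - a) := by
  simp only [poissonWeight, ← prod_mul_distrib, Pi.sub_apply]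
  exact prod_congr rfl fun k _ => pow_div_factorial_mul_descFactorial (c k) (h k)

lemma rate_eq_zero_of_not_le (κ : ℝ) {y x : σ → ℕ} (h : ¬ y ≤ x) : rate κ y x = 0 := by
  obtain ⟨k, hk⟩ : ∃ k, ¬ y k ≤ x k := by simpa [Pi.le_def] using h
  refine mul_eq_zero_of_right κ (prod_eq_zero (mem_univ k) ?_)
  exact_mod_cast Nat.descFactorial_of_lt (not_le.mp hk)

theorem poissonWeight_mul_rate_balance (c : σ → ℝ) {κ₁ κ₂ : ℝ} {a b x : σ → ℕ}
    (hdb : κ₁ * ∏ k, c k ^ a k = κ₂ * ∏ k, c k ^ b k) (hb : b ≤ x) :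
    poissonWeight c (x + a - b) * rate κ₁ a (x + a - b) = poissonWeight c x * rate κ₂ b x := by
  have ha : a ≤ x + a - b := fun k => by
    simp only [Pi.add_apply, Pi.sub_apply]; have : b k ≤ x k := hb k; omega
  have hsub : x + a - b - a = x - b := by
    ext k; simp only [Pi.add_apply, Pi.sub_apply]; have : b k ≤ x k := hb k; omega
  calc poissonWeight c (x + a - b) * rate κ₁ a (x + a - b)
      = (κ₁ * ∏ k, c k ^ a k) * poissonWeight c (x - b) := by
        rw [rate, mul_left_comm, poissonWeight_mul_prod_descFactorial c ha, hsub]; ring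
    _ = (κ₂ * ∏ k, c k ^ b k) * poissonWeight c (x - b) := by rw [hdb]
    _ = poissonWeight c x * rate κ₂ b x := by
        rw [rate, mul_left_comm, poissonWeight_mul_prod_descFactorial c hb]; ring

theorem inflow_eq_reverse_outflow (c : σ → ℝ) {κ₁ κ₂ : ℝ} {a b : σ → ℕ}
    (hdb : κ₁ * ∏ k, c k ^ a k = κ₂ * ∏ k, c k ^ b k) (x : σ → ℕ) [Decidable (∀ k, b k ≤ x k)] :
    (if ∀ k, b k ≤ x k then poissonWeight c (x + a - b) * rate κ₁ a (x + a - b) else 0)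
      = poissonWeight c x * rate κ₂ b x := by
  split_ifs with hb
  · exact poissonWeight_mul_rate_balance c hdb hb
  · rw [rate_eq_zero_of_not_le κ₂ hb, mul_zero]

end MassAction

open MassAction in
theorem stmt11_general (n : ℕ) {ι : Type} [Fintype ι]
    (y y' : ι → Fin n → ℕ) (κ : ι → ℝ)
    (rev : ι → ι) (hrevinv : ∀ e, rev (rev e) = e)
    (hrev1 : ∀ e, y (rev e) = y' e)
    (c : Fin n → ℝ)
    (hdb : ∀ e, κ e * ∏ k, c k ^ y e k = κ (rev e) * ∏ k, c k ^ y' e k) :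
    ∀ x : Fin n → ℕ,
      ∑ e : ι,
        ((if ∀ k, y' e k ≤ x k then
            (∏ k, c k ^ (x k + y e k - y' e k) / (Nat.factorial (x k + y e k - y' e k) : ℝ)) *
              (κ e * ∏ k, (Nat.descFactorial (x k + y e k - y' e k) (y e k) : ℝ))
          else 0)
          - (∏ k, c k ^ x k / (Nat.factorial (x k) : ℝ)) *
              (κ e * ∏ k, (Nat.descFactorial (x k) (y e k) : ℝ))) = 0 := by
  intro x
  let outflow : ι → ℝ := fun e => poissonWeight c x * rate (κ e) (y e) x
  have hinflow : ∀ e, (if ∀ k, y' e k ≤ x k then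
      poissonWeight c (x + y e - y' e) * rate (κ e) (y e) (x + y e - y' e) else 0)
        = outflow (rev e) := fun e => by
    rw [inflow_eq_reverse_outflow c (hdb e) x, ← hrev1]
  change ∑ e, ((if ∀ k, y' e k ≤ x k then
      poissonWeight c (x + y e - y' e) * rate (κ e) (y e) (x + y e - y' e) else 0) - outflow e) = 0
  simp only [hinflow]
  rw [sum_sub_distrib, Fintype.sum_bijective rev (Function.Involutive.bijective hrevinv) _ _
    fun _ => rfl, sub_self]

theorem stmt11 (n : ℕ) {ι : Type} [Fintype ι]
    (y y' : ι → Fin n → ℕ) (κ : ι → ℝ) (hκ : ∀ e, 0 < κ e)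
    (rev : ι → ι) (hrevinv : ∀ e, rev (rev e) = e)
    (hrev1 : ∀ e, y (rev e) = y' e) (hrev2 : ∀ e, y' (rev e) = y e)
    (c : Fin n → ℝ) (hc : ∀ k, 0 < c k)
    (hdb : ∀ e, κ e * ∏ k, c k ^ y e k = κ (rev e) * ∏ k, c k ^ y' e k) :
    ∀ x : Fin n → ℕ,
      ∑ e : ι,
        ((if ∀ k, y' e k ≤ x k then
            (∏ k, c k ^ (x k + y e k - y' e k) / (Nat.factorial (x k + y e k - y' e k) : ℝ)) *
              (κ e * ∏ k, (Nat.descFactorial (x k + y e k - y' e k) (y e k) : ℝ))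
          else 0)
          - (∏ k, c k ^ x k / (Nat.factorial (x k) : ℝ)) *
              (κ e * ∏ k, (Nat.descFactorial (x k) (y e k) : ℝ))) = 0 :=
  stmt11_general n y y' κ rev hrevinv hrev1 c hdb
end
end

section
/- For any integer x ≥ 1 and κ₁ > 0, the probability that a birth-death chain at state v₀ > x with downward rates φ(v) = v!/(v-x-1)! (scaled by κ₂) and upward rate κ₁ makes its first v₀ - x jumps all downward is at least exp(-κ₁/(κ₂ · x! · x)). Formally: ∏_{v=x+1}^{v₀} φ(v)/(κ₁/κ₂ + φ(v)) ≥ exp(-κ₁/(κ₂ · x! · x)). -/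
lemma dfpos {n k : ℕ} (h : k ≤ n) : 0 < n.descFactorial k :=
  Nat.pos_of_ne_zero fun he => absurd (Nat.descFactorial_eq_zero_iff_lt.mp he) (not_lt.mpr h)

lemma telescope_sum (x : ℕ) (hx : 1 ≤ x) :
    ∀ v₀, x ≤ v₀ →
      ∑ v ∈ Finset.Icc (x + 1) v₀, (1 : ℝ) / (Nat.descFactorial v (x + 1)) =
        1 / (x * Nat.factorial x) - 1 / (x * Nat.descFactorial v₀ x) := by
  intro v₀
  induction v₀ with
  | zero => intro h; omega
  | succ n ih =>
    intro h
    rcases Nat.lt_or_ge x (n + 1) with hlt | hge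
    · have hxn : x ≤ n := Nat.lt_succ_iff.mp hlt
      rw [Finset.sum_Icc_succ_top (by omega : x + 1 ≤ n + 1), ih hxn]
      -- key identities
      have hA : Nat.descFactorial (n + 1) (x + 1) = (n + 1) * Nat.descFactorial n x :=
        Nat.succ_descFactorial_succ n x
      have hD : Nat.descFactorial (n + 1) (x + 1) =
          (n + 1 - x) * Nat.descFactorial (n + 1) x := Nat.descFactorial_succ (n + 1) x
      have hψn : (0 : ℝ) < (Nat.descFactorial n x : ℝ) := by
        exact_mod_cast dfpos hxn
      have hψn1 : (0 : ℝ) < (Nat.descFactorial (n + 1) x : ℝ) := by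
        exact_mod_cast dfpos (by omega)
      have hxpos : (0 : ℝ) < (x : ℝ) := by exact_mod_cast hx
      have hA' : ((Nat.descFactorial (n + 1) (x + 1) : ℕ) : ℝ) =
          ((n : ℝ) + 1) * (Nat.descFactorial n x : ℝ) := by exact_mod_cast hA
      have hD' : ((Nat.descFactorial (n + 1) (x + 1) : ℕ) : ℝ) =
          ((n : ℝ) + 1 - (x : ℝ)) * (Nat.descFactorial (n + 1) x : ℝ) := by
        have : ((n + 1 - x : ℕ) : ℝ) = (n : ℝ) + 1 - (x : ℝ) := by
          push_cast [Nat.cast_sub (by omega : x ≤ n + 1)]; ring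
        rw [hD]; push_cast [Nat.cast_sub (by omega : x ≤ n + 1)]; ring
      have hφ : (0 : ℝ) < (Nat.descFactorial (n + 1) (x + 1) : ℝ) := by
        exact_mod_cast dfpos (by omega)
      -- goal: S_n + 1/φ(n+1) = 1/(x x!) - 1/(x ψ(n+1))
      have key : 1 / (x * (Nat.descFactorial n x : ℝ)) -
          1 / (x * (Nat.descFactorial (n + 1) x : ℝ)) =
          1 / (Nat.descFactorial (n + 1) (x + 1) : ℝ) := by
        rw [div_sub_div _ _ (by positivity) (by positivity), div_eq_div_iff (by positivity) hφ.ne']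
        linear_combination (x : ℝ) * (Nat.descFactorial (n + 1) x : ℝ) * hA' -
          (x : ℝ) * (Nat.descFactorial n x : ℝ) * hD'
      linarith [key]
    · have hx' : x = n + 1 := by omega
      subst hx'
      rw [Nat.descFactorial_self, Finset.Icc_eq_empty (by omega)]
      simp
  
theorem stmt14 (x : ℕ) (hx : 1 ≤ x) (κ₁ κ₂ : ℝ) (h1 : 0 < κ₁) (h2 : 0 < κ₂)
    (v₀ : ℕ) (hv₀ : x < v₀) :
    Real.exp (-κ₁ / (κ₂ * (Nat.factorial x : ℝ) * x)) ≤
      ∏ v ∈ Finset.Icc (x + 1) v₀,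
        (Nat.descFactorial v (x + 1) : ℝ) / (κ₁ / κ₂ + (Nat.descFactorial v (x + 1) : ℝ)) := by
  set c : ℝ := κ₁ / κ₂ with hc
  have hcpos : 0 < c := div_pos h1 h2
  have hxpos : (0 : ℝ) < (x : ℝ) := by exact_mod_cast hx
  have hfac : (0 : ℝ) < (Nat.factorial x : ℝ) := by exact_mod_cast x.factorial_pos
  -- step 1: product ≥ exp(-c * ∑ 1/φ)
  have step1 : Real.exp (∑ v ∈ Finset.Icc (x + 1) v₀,
      (-c / (Nat.descFactorial v (x + 1) : ℝ))) ≤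
      ∏ v ∈ Finset.Icc (x + 1) v₀,
        (Nat.descFactorial v (x + 1) : ℝ) / (c + (Nat.descFactorial v (x + 1) : ℝ)) := by
    rw [Real.exp_sum]
    apply Finset.prod_le_prod
    · intro i _; positivity
    · intro i hi
      have hix : x + 1 ≤ i := (Finset.mem_Icc.mp hi).1
      have hφ : (0 : ℝ) < (Nat.descFactorial i (x + 1) : ℝ) := by
        exact_mod_cast dfpos hix
      set φ := (Nat.descFactorial i (x + 1) : ℝ)
      have h1e : 1 + c / φ ≤ Real.exp (c / φ) := Real.add_one_le_exp (c / φ) |>.trans_eq' (by ring_nf)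
      have hpos1 : (0 : ℝ) < 1 + c / φ := by positivity
      have : Real.exp (-c / φ) ≤ 1 / (1 + c / φ) := by
        rw [neg_div, Real.exp_neg]
        exact one_div_le_one_div_of_le hpos1 h1e |>.trans_eq' (by rw [one_div])
      have heq : 1 + c / φ = (c + φ) / φ := by
        rw [add_div, div_self hφ.ne']; ring
      calc Real.exp (-c / φ) ≤ 1 / (1 + c / φ) := this
        _ = φ / (c + φ) := by rw [heq, one_div_div]
  refine le_trans ?_ step1
  rw [Real.exp_le_exp]
  have hsum : ∑ v ∈ Finset.Icc (x + 1) v₀, (-c / (Nat.descFactorial v (x + 1) : ℝ)) =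
      -c * ∑ v ∈ Finset.Icc (x + 1) v₀, (1 : ℝ) / (Nat.descFactorial v (x + 1) : ℝ) := by
    rw [Finset.mul_sum]
    exact Finset.sum_congr rfl fun i _ => by ring
  rw [hsum, telescope_sum x hx v₀ hv₀.le]
  have hψ : (0 : ℝ) < (Nat.descFactorial v₀ x : ℝ) := by
    exact_mod_cast dfpos hv₀.le
  have h2' : 1 / ((x : ℝ) * Nat.factorial x) - 1 / ((x : ℝ) * Nat.descFactorial v₀ x) ≤
      1 / ((x : ℝ) * Nat.factorial x) := by
    have : 0 ≤ 1 / ((x : ℝ) * Nat.descFactorial v₀ x) := by positivity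
    linarith
  have : -κ₁ / (κ₂ * (Nat.factorial x : ℝ) * x) = -c * (1 / ((x : ℝ) * Nat.factorial x)) := by
    rw [hc, neg_div, neg_mul, mul_one_div, div_div]; ring_nf
  rw [this]
  apply mul_le_mul_of_nonpos_left h2' (by linarith)
end

section
/- Consider the continuous-time Markov chain on ℤ_{≥0} for the network 0 → V at rate c², V → 2V at rate c, and 2V → 0 at rate 1, where c > 0. The Poisson distribution with mean c, π(v) = e^{-c} c^v / v!, is a stationary distribution: for every v ∈ ℤ_{≥0}, the stationary (master) equation ∑_{v'} [π(v') Q(v', v) - π(v) Q(v, v')] = 0 holds, where Q(v, v+1) = c² + cv, Q(v, v-2) = v(v-1), and all other off-diagonal rates are zero. -/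
theorem stmt17 (c : ℝ) (hc : 0 < c)
    (Q : ℕ → ℕ → ℝ)
    (hQ : ∀ a b : ℕ, Q a b =
      if b = a + 1 then c ^ 2 + c * a
      else if b + 2 = a then (a : ℝ) * ((a : ℝ) - 1) else 0) :
    ∀ v : ℕ,
      ∑' v' : ℕ,
        ((Real.exp (-c) * c ^ v' / (Nat.factorial v' : ℝ)) * Q v' v
          - (Real.exp (-c) * c ^ v / (Nat.factorial v : ℝ)) * Q v v') = 0 := by
  intro v
  set f : ℕ → ℝ := fun v' =>
    ((Real.exp (-c) * c ^ v' / (Nat.factorial v' : ℝ)) * Q v' v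
      - (Real.exp (-c) * c ^ v / (Nat.factorial v : ℝ)) * Q v v') with hf
  show ∑' v', f v' = 0
  match v with
  | 0 =>
    have hs : ∀ b ∉ ({1, 2} : Finset ℕ), f b = 0 := by
      intro b hb
      simp at hb
      simp only [hf]
      rw [hQ, hQ, if_neg (by omega), if_neg (by omega), if_neg (by omega),
        if_neg (by omega)]
      ring
    rw [tsum_eq_sum hs]
    have e1 : Q 0 1 = c ^ 2 := by rw [hQ, if_pos (by omega)]; push_cast; ring
    have e2 : Q 2 0 = 2 := by
      rw [hQ, if_neg (by omega), if_pos (by omega)]; norm_num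
    have e3 : Q 1 0 = 0 := by rw [hQ, if_neg (by omega), if_neg (by omega)]
    have e4 : Q 0 2 = 0 := by rw [hQ, if_neg (by omega), if_neg (by omega)]
    simp only [hf]
    rw [Finset.sum_insert (by decide), Finset.sum_singleton, e1, e2, e3, e4]
    norm_num [Nat.factorial]
  | 1 =>
    have hs : ∀ b ∉ ({0, 2, 3} : Finset ℕ), f b = 0 := by
      intro b hb
      simp at hb
      simp only [hf]
      rw [hQ, hQ, if_neg (by omega), if_neg (by omega), if_neg (by omega),
        if_neg (by omega)]
      ring
    rw [tsum_eq_sum hs]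
    have e1 : Q 0 1 = c ^ 2 := by rw [hQ, if_pos (by omega)]; push_cast; ring
    have e2 : Q 3 1 = 6 := by
      rw [hQ, if_neg (by omega), if_pos (by omega)]; norm_num
    have e3 : Q 1 2 = c ^ 2 + c := by rw [hQ, if_pos (by omega)]; push_cast; ring
    have e4 : Q 1 0 = 0 := by rw [hQ, if_neg (by omega), if_neg (by omega)]
    have e5 : Q 2 1 = 0 := by rw [hQ, if_neg (by omega), if_neg (by omega)]
    have e6 : Q 1 3 = 0 := by rw [hQ, if_neg (by omega), if_neg (by omega)]
    simp only [hf]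
    rw [Finset.sum_insert (by decide), Finset.sum_insert (by decide),
      Finset.sum_singleton, e1, e2, e3, e4, e5, e6]
    norm_num [Nat.factorial]
    ring
  | (n+2) =>
    have hs : ∀ b ∉ ({n, n+1, n+3, n+4} : Finset ℕ), f b = 0 := by
      intro b hb
      simp at hb
      simp only [hf]
      rw [hQ, hQ, if_neg (by omega), if_neg (by omega), if_neg (by omega),
        if_neg (by omega)]
      ring
    rw [tsum_eq_sum hs]
    have e1 : Q (n+1) (n+2) = c ^ 2 + c * ((n:ℝ)+1) := by
      rw [hQ, if_pos (by omega)]; push_cast; ring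
    have e2 : Q (n+4) (n+2) = ((n:ℝ)+4) * ((n:ℝ)+3) := by
      rw [hQ, if_neg (by omega), if_pos (by omega)]; push_cast; ring
    have e3 : Q (n+2) (n+3) = c ^ 2 + c * ((n:ℝ)+2) := by
      rw [hQ, if_pos (by omega)]; push_cast; ring
    have e4 : Q (n+2) n = ((n:ℝ)+2) * ((n:ℝ)+1) := by
      rw [hQ, if_neg (by omega), if_pos (by omega)]; push_cast; ring
    have e5 : Q n (n+2) = 0 := by
      simp only [hQ]; split_ifs <;> first | rfl | omega
    have e6 : Q (n+2) (n+1) = 0 := by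
      simp only [hQ]; split_ifs <;> first | rfl | omega
    have e7 : Q (n+3) (n+2) = 0 := by
      simp only [hQ]; split_ifs <;> first | rfl | omega
    have e8 : Q (n+2) (n+4) = 0 := by
      simp only [hQ]; split_ifs <;> first | rfl | omega
    simp only [hf]
    rw [Finset.sum_insert (by simp only [Finset.mem_insert, Finset.mem_singleton]; omega), Finset.sum_insert (by simp only [Finset.mem_insert, Finset.mem_singleton]; omega),
      Finset.sum_insert (by simp only [Finset.mem_insert, Finset.mem_singleton]; omega), Finset.sum_singleton,
      e1, e2, e3, e4, e5, e6, e7, e8]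
    have h1 : (Nat.factorial (n+1) : ℝ) = ((n:ℝ)+1) * Nat.factorial n := by
      push_cast [Nat.factorial_succ]; ring
    have h2 : (Nat.factorial (n+2) : ℝ) = ((n:ℝ)+2) * ((n:ℝ)+1) * Nat.factorial n := by
      push_cast [Nat.factorial_succ]; ring
    have h3 : (Nat.factorial (n+3) : ℝ)
        = ((n:ℝ)+3) * ((n:ℝ)+2) * ((n:ℝ)+1) * Nat.factorial n := by
      push_cast [Nat.factorial_succ]; ring
    have h4 : (Nat.factorial (n+4) : ℝ)
        = ((n:ℝ)+4) * ((n:ℝ)+3) * ((n:ℝ)+2) * ((n:ℝ)+1) * Nat.factorial n := by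
      push_cast [Nat.factorial_succ]; ring
    have hfn : (0:ℝ) < Nat.factorial n := by positivity
    rw [h1, h2, h3, h4]
    have hn1 : ((n:ℝ)+1) ≠ 0 := by positivity
    have hn2 : ((n:ℝ)+2) ≠ 0 := by positivity
    have hn3 : ((n:ℝ)+3) ≠ 0 := by positivity
    have hn4 : ((n:ℝ)+4) ≠ 0 := by positivity
    field_simp
    ring
end
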